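/- Let g be a finite-dimensional real Lie algebra, X ∈ g, and suppose there exists a Lie algebra automorphism φ : g → g and a real number c with |c| > 1 such that φ(X) = c • X. Then the linear map ad(X) : g → g is nilpotent. -/

import Mathlib

/-!
Since `φ` is an automorphism, `ad (φ X) = φ ∘ ad X ∘ φ⁻¹`, so `c • ad X` and `ad X` have the same
characteristic polynomial. The `i`-th coefficient of the characteristic polynomial is a
homogeneous polynomial of degree `n - i` in the entries of the operator, so scaling by `c`
multiplies it by `c ^ (n - i)`. As `c` is not a root of unity, every coefficient below the leading
one vanishes, i.e. the characteristic polynomial of `ad X` is `X ^ n`.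
-/

open Polynomial Module

theorem MvPolynomial.IsHomogeneous.eval_smul {σ R : Type*} [CommSemiring R]
    {φ : MvPolynomial σ R} {n : ℕ} (hφ : φ.IsHomogeneous n) (c : R) (x : σ → R) :
    MvPolynomial.eval (c • x) φ = c ^ n * MvPolynomial.eval x φ := by
  rw [MvPolynomial.eval_eq, MvPolynomial.eval_eq, Finset.mul_sum]
  refine Finset.sum_congr rfl fun d hd => ?_
  have hdeg : ∑ i ∈ d.support, d i = n := by
    rw [← hφ (MvPolynomial.mem_support_iff.mp hd)]
    simp [Finsupp.weight_apply, Finsupp.sum]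
  simp only [Pi.smul_apply, smul_eq_mul, mul_pow, Finset.prod_mul_distrib,
    Finset.prod_pow_eq_pow_sum, hdeg]
  ring

theorem LinearMap.charpoly_smul_coeff {R M : Type*} [CommRing R] [Nontrivial R] [AddCommGroup M]
    [Module R M] [Module.Free R M] [Module.Finite R M] (c : R) (f : Module.End R M) (i : ℕ) :
    (c • f).charpoly.coeff i = c ^ (finrank R M - i) * f.charpoly.coeff i := by
  rcases le_or_gt i (finrank R M) with hi | hi
  · let b := Module.Free.chooseBasis R (Module.End R M)
    have hhom := (LinearMap.id : Module.End R M →ₗ[R] _).polyCharpoly_coeff_isHomogeneous b i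
      (finrank R M - i) (by omega)
    rw [← LinearMap.id_apply (R := R) (c • f), ← LinearMap.id_apply (R := R) f,
      ← LinearMap.polyCharpoly_coeff_eval _ b, ← LinearMap.polyCharpoly_coeff_eval _ b,
      map_smul, Finsupp.coe_smul, hhom.eval_smul, LinearMap.id_apply]
  · rw [coeff_eq_zero_of_natDegree_lt ((c • f).charpoly_natDegree ▸ hi),
      coeff_eq_zero_of_natDegree_lt (f.charpoly_natDegree ▸ hi), mul_zero]

theorem LinearMap.isNilpotent_of_charpoly_smul_eq {R M : Type*} [CommRing R] [IsDomain R]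
    [AddCommGroup M] [Module R M] [Module.Free R M] [Module.Finite R M] {c : R}
    (hc : ∀ k, 0 < k → c ^ k ≠ 1) {f : Module.End R M} (hf : (c • f).charpoly = f.charpoly) :
    IsNilpotent f := by
  rw [isNilpotent_iff_charpoly, ← f.charpoly_natDegree,
    f.charpoly_monic.eq_X_pow_iff_natDegree_le_natTrailingDegree]
  refine le_natTrailingDegree f.charpoly_monic.ne_zero fun i hi => ?_
  rw [f.charpoly_natDegree] at hi
  have hfix : c ^ (finrank R M - i) * f.charpoly.coeff i = 1 * f.charpoly.coeff i := by
    rw [← f.charpoly_smul_coeff, hf, one_mul]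
  by_contra hne
  exact hc _ (by omega) (mul_right_cancel₀ hne hfix)

/-- If `X` in a finite-dimensional real Lie algebra is renormalized by an automorphism,
i.e. `φ X = c • X` with `|c| > 1`, then `ad X` is nilpotent. -/
theorem stmt1 {g : Type*} [LieRing g] [LieAlgebra ℝ g] [FiniteDimensional ℝ g]
    (X : g) (φ : g ≃ₗ⁅ℝ⁆ g) (c : ℝ) (hc : 1 < |c|) (hφ : φ X = c • X) :
    IsNilpotent (LieAlgebra.ad ℝ g X) := by
  have hc_pow : ∀ k, 0 < k → c ^ k ≠ 1 := fun k hk h => by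
    simpa [← abs_pow, h] using one_lt_pow₀ hc hk.ne'
  apply LinearMap.isNilpotent_of_charpoly_smul_eq hc_pow
  rw [← map_smul, ← hφ, ← LieAlgebra.conj_ad_apply, LinearEquiv.charpoly_conj]
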